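/- arXiv:1410.2505 — 7 statements merged into one kernel-verified Lean document; each statement's English description precedes it below -/
import Mathlib

section
/- Let Φ ∈ ℝ^{m×n} and S ⊆ {1,…,n} with δ_{|S|} < 1. Then for every u ∈ ℝ^{|S|}, ‖u‖₂/(1+δ_{|S|}) ≤ ‖(Φ_S' Φ_S)^{-1} u‖₂ ≤ ‖u‖₂/(1−δ_{|S|}). -/
open Finset Matrix

/-- Squared-entries `ℓ₂` norm of a finite real vector. -/
noncomputable def l2 {ι : Type*} [Fintype ι] (x : ι → ℝ) : ℝ :=
  Real.sqrt (∑ i, x i ^ 2)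

/-- A vector is `K`-sparse if it has at most `K` nonzero entries. -/
def Ksparse {n : ℕ} (K : ℕ) (x : Fin n → ℝ) : Prop :=
  (Finset.univ.filter (fun i => x i ≠ 0)).card ≤ K

/-- `δ` is a valid restricted isometry constant of order `K` for `Φ`. -/
def RIP {m n : ℕ} (Φ : Matrix (Fin m) (Fin n) ℝ) (K : ℕ) (δ : ℝ) : Prop :=
  ∀ x : Fin n → ℝ, Ksparse K x →
    (1 - δ) * ∑ i, x i ^ 2 ≤ ∑ i, (Φ.mulVec x) i ^ 2 ∧
    ∑ i, (Φ.mulVec x) i ^ 2 ≤ (1 + δ) * ∑ i, x i ^ 2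

/-- Column submatrix `Φ_S`. -/
def colSub {m n : ℕ} (Φ : Matrix (Fin m) (Fin n) ℝ) (S : Finset (Fin n)) :
    Matrix (Fin m) S ℝ := fun r c => Φ r c

/-- Gram matrix `Φ_S' Φ_S`. -/
noncomputable def gram {m n : ℕ} (Φ : Matrix (Fin m) (Fin n) ℝ) (S : Finset (Fin n)) :
    Matrix S S ℝ := (colSub Φ S)ᵀ * colSub Φ S

/-- Pseudoinverse `Φ_S^† = (Φ_S'Φ_S)⁻¹ Φ_S'` (for `Φ_S` of full column rank). -/
noncomputable def pinv {m n : ℕ} (Φ : Matrix (Fin m) (Fin n) ℝ) (S : Finset (Fin n)) :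
    Matrix S (Fin m) ℝ := (gram Φ S)⁻¹ * (colSub Φ S)ᵀ

/-- Projection `P_S = Φ_S Φ_S^†` onto the span of the columns of `Φ_S`. -/
noncomputable def proj {m n : ℕ} (Φ : Matrix (Fin m) (Fin n) ℝ) (S : Finset (Fin n)) :
    Matrix (Fin m) (Fin m) ℝ := colSub Φ S * pinv Φ S

/-- Projection `P_S^⊥ = I - P_S`. -/
noncomputable def projPerp {m n : ℕ} (Φ : Matrix (Fin m) (Fin n) ℝ) (S : Finset (Fin n)) :
    Matrix (Fin m) (Fin m) ℝ := 1 - proj Φ S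

/-!
Write `A = Φ_S` and `G = AᵀA`, so that `⟪G x, y⟫ = ⟪A x, A y⟫`. Restricted to vectors supported
on `S`, the RIP says `(1 - δ)‖x‖² ≤ ‖A x‖² ≤ (1 + δ)‖x‖²`. Cauchy–Schwarz then gives
`(1 - δ)‖x‖² ≤ ⟪G x, x⟫ ≤ ‖G x‖‖x‖` and
`‖G x‖² = ⟪A x, A (G x)⟫ ≤ (1 + δ)‖x‖‖G x‖`, i.e. `(1 - δ)‖x‖ ≤ ‖G x‖ ≤ (1 + δ)‖x‖`.
The lower bound makes `G` invertible, and applying both bounds to `x = G⁻¹ u` gives the claim.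
-/

section l2

variable {ι : Type*} [Fintype ι]

lemma l2_nonneg (x : ι → ℝ) : 0 ≤ l2 x := Real.sqrt_nonneg _

lemma l2_sq (x : ι → ℝ) : l2 x ^ 2 = ∑ i, x i ^ 2 :=
  Real.sq_sqrt (Finset.sum_nonneg fun i _ => sq_nonneg (x i))

lemma l2_zero : l2 (0 : ι → ℝ) = 0 := by simp [l2]

lemma l2_sq_eq_dotProduct (x : ι → ℝ) : l2 x ^ 2 = x ⬝ᵥ x := by
  simp only [l2_sq, dotProduct, ← sq]

lemma dotProduct_le_l2_mul_l2 (x y : ι → ℝ) : x ⬝ᵥ y ≤ l2 x * l2 y :=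
  Real.sum_mul_le_sqrt_mul_sqrt univ x y

lemma eq_zero_of_l2_eq_zero {x : ι → ℝ} (hx : l2 x = 0) : x = 0 := by
  rw [← dotProduct_self_eq_zero, ← l2_sq_eq_dotProduct, hx, sq, zero_mul]

end l2

section GramBounds

variable {ι κ : Type*} [Fintype ι] [Fintype κ] (A : Matrix ι κ ℝ)

lemma transpose_mul_self_mulVec_dotProduct (x y : κ → ℝ) :
    (Aᵀ * A) *ᵥ x ⬝ᵥ y = A *ᵥ x ⬝ᵥ A *ᵥ y := by
  rw [← mulVec_mulVec, mulVec_transpose, ← dotProduct_mulVec]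

lemma mul_l2_le_l2_transpose_mul_self_mulVec {c : ℝ}
    (hA : ∀ x, c * l2 x ^ 2 ≤ l2 (A *ᵥ x) ^ 2) (x : κ → ℝ) :
    c * l2 x ≤ l2 ((Aᵀ * A) *ᵥ x) := by
  have hcs : c * l2 x ^ 2 ≤ l2 ((Aᵀ * A) *ᵥ x) * l2 x := by
    calc c * l2 x ^ 2 ≤ l2 (A *ᵥ x) ^ 2 := hA x
      _ = (Aᵀ * A) *ᵥ x ⬝ᵥ x := by
        rw [l2_sq_eq_dotProduct, transpose_mul_self_mulVec_dotProduct]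
      _ ≤ l2 ((Aᵀ * A) *ᵥ x) * l2 x := dotProduct_le_l2_mul_l2 _ _
  rcases (l2_nonneg x).eq_or_lt with hx | hx
  · rw [← hx, mul_zero]
    exact l2_nonneg _
  · nlinarith

lemma l2_transpose_mul_self_mulVec_le {C : ℝ} (hC : 0 ≤ C)
    (hA : ∀ x, l2 (A *ᵥ x) ^ 2 ≤ C * l2 x ^ 2) (x : κ → ℝ) :
    l2 ((Aᵀ * A) *ᵥ x) ≤ C * l2 x := by
  set g := (Aᵀ * A) *ᵥ x
  have hA' : ∀ y, l2 (A *ᵥ y) ≤ √C * l2 y := fun y => by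
    rw [← pow_le_pow_iff_left₀ (l2_nonneg _) (mul_nonneg (Real.sqrt_nonneg C) (l2_nonneg y))
      two_ne_zero, mul_pow, Real.sq_sqrt hC]
    exact hA y
  have hcs : l2 g ^ 2 ≤ C * l2 x * l2 g := by
    calc l2 g ^ 2 = A *ᵥ x ⬝ᵥ A *ᵥ g := by
          rw [l2_sq_eq_dotProduct, transpose_mul_self_mulVec_dotProduct]
      _ ≤ l2 (A *ᵥ x) * l2 (A *ᵥ g) := dotProduct_le_l2_mul_l2 _ _
      _ ≤ (√C * l2 x) * (√C * l2 g) :=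
          mul_le_mul (hA' x) (hA' g) (l2_nonneg _) ((l2_nonneg _).trans (hA' x))
      _ = C * l2 x * l2 g := by rw [mul_mul_mul_comm, Real.mul_self_sqrt hC, mul_assoc]
  have hCx : 0 ≤ C * l2 x := mul_nonneg hC (l2_nonneg x)
  nlinarith [l2_nonneg g]

end GramBounds

lemma isUnit_det_of_mul_l2_le_l2_mulVec {κ : Type*} [Fintype κ] [DecidableEq κ]
    {M : Matrix κ κ ℝ} {c : ℝ} (hc : 0 < c) (hM : ∀ x, c * l2 x ≤ l2 (M *ᵥ x)) :
    IsUnit M.det := by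
  refine Ne.isUnit fun hdet => ?_
  obtain ⟨x, hx, hMx⟩ := exists_mulVec_eq_zero_iff.mpr hdet
  have hx0 : l2 x ≤ 0 := by
    have := hM x
    rw [hMx, l2_zero] at this
    exact nonpos_of_mul_nonpos_right this hc
  exact hx (eq_zero_of_l2_eq_zero (le_antisymm hx0 (l2_nonneg x)))

section ExtendByZero

variable {ι : Type*} [Fintype ι] [DecidableEq ι] (S : Finset ι)

def extendByZero (x : S → ℝ) : ι → ℝ :=
  fun i => if h : i ∈ S then x ⟨i, h⟩ else 0

lemma sum_extendByZero (x : S → ℝ) (F : ι → ℝ → ℝ) (hF : ∀ i, F i 0 = 0) :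
    ∑ i, F i (extendByZero S x i) = ∑ c : S, F c (x c) := by
  have hS : ∑ c : S, F c (x c) = ∑ i ∈ S, F i (extendByZero S x i) := by
    rw [← Finset.sum_coe_sort S]
    exact Finset.sum_congr rfl fun c _ => by simp [extendByZero, c.2]
  rw [hS, Finset.sum_subset (Finset.subset_univ S) fun i _ hi => by simp [extendByZero, hi, hF]]

lemma card_support_extendByZero_le (x : S → ℝ) :
    (univ.filter fun i => extendByZero S x i ≠ 0).card ≤ S.card := by
  refine Finset.card_le_card fun i hi => ?_
  by_contra hiS
  simp [extendByZero, hiS] at hi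

end ExtendByZero

lemma colSub_mulVec {m n : ℕ} (Φ : Matrix (Fin m) (Fin n) ℝ) (S : Finset (Fin n)) (x : S → ℝ) :
    colSub Φ S *ᵥ x = Φ *ᵥ extendByZero S x := by
  funext r
  exact (sum_extendByZero S x (fun i t => Φ r i * t) fun i => mul_zero _).symm

lemma RIP.l2_colSub_mulVec_sq_bounds {m n : ℕ} {Φ : Matrix (Fin m) (Fin n) ℝ}
    {S : Finset (Fin n)} {δ : ℝ} (hRIP : RIP Φ S.card δ) (x : S → ℝ) :
    (1 - δ) * l2 x ^ 2 ≤ l2 (colSub Φ S *ᵥ x) ^ 2 ∧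
    l2 (colSub Φ S *ᵥ x) ^ 2 ≤ (1 + δ) * l2 x ^ 2 := by
  have h := hRIP (extendByZero S x) (card_support_extendByZero_le S x)
  rwa [sum_extendByZero S x (fun _ t => t ^ 2) fun _ => zero_pow two_ne_zero,
    ← colSub_mulVec, ← l2_sq, ← l2_sq] at h

/-- Consequence of RIP: `‖u‖/(1+δ) ≤ ‖(Φ_S'Φ_S)⁻¹ u‖ ≤ ‖u‖/(1-δ)`. -/
theorem gram_inv_norm_bounds {m n : ℕ} (Φ : Matrix (Fin m) (Fin n) ℝ) (S : Finset (Fin n))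
    (δ : ℝ) (hδ0 : 0 ≤ δ) (hδ1 : δ < 1) (hRIP : RIP Φ S.card δ) (u : S → ℝ) :
    l2 u / (1 + δ) ≤ l2 ((gram Φ S)⁻¹.mulVec u) ∧
    l2 ((gram Φ S)⁻¹.mulVec u) ≤ l2 u / (1 - δ) := by
  have hlower : ∀ x, (1 - δ) * l2 x ≤ l2 (gram Φ S *ᵥ x) :=
    mul_l2_le_l2_transpose_mul_self_mulVec _ fun x => (hRIP.l2_colSub_mulVec_sq_bounds x).1
  have hupper : ∀ x, l2 (gram Φ S *ᵥ x) ≤ (1 + δ) * l2 x :=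
    l2_transpose_mul_self_mulVec_le _ (by linarith) fun x =>
      (hRIP.l2_colSub_mulVec_sq_bounds x).2
  have hunit := isUnit_det_of_mul_l2_le_l2_mulVec (by linarith) hlower
  have hu : gram Φ S *ᵥ ((gram Φ S)⁻¹ *ᵥ u) = u := by
    rw [mulVec_mulVec, mul_nonsing_inv _ hunit, one_mulVec]
  constructor
  · rw [div_le_iff₀ (by linarith), mul_comm]
    simpa only [hu] using hupper ((gram Φ S)⁻¹ *ᵥ u)
  · rw [le_div_iff₀ (by linarith), mul_comm]
    simpa only [hu] using hlower ((gram Φ S)⁻¹ *ᵥ u)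
end

section
/- Let S₁, S₂ ⊆ {1,…,n} be disjoint index sets with δ_{|S₁|+|S₂|} < 1. Then for any vector v ∈ ℝⁿ supported on S₂, ‖Φ_{S₁}' Φ v‖₂ ≤ δ_{|S₁|+|S₂|} ‖v‖₂. -/
open Finset Matrix

lemma cross_inner_le {m n : ℕ} (Φ : Matrix (Fin m) (Fin n) ℝ)
    (S₁ S₂ : Finset (Fin n)) (hdisj : Disjoint S₁ S₂) (δ : ℝ)
    (hRIP : RIP Φ (S₁.card + S₂.card) δ)
    (a b : Fin n → ℝ) (ha : ∀ i, i ∉ S₁ → a i = 0) (hb : ∀ i, i ∉ S₂ → b i = 0) :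
    ∑ r, Φ.mulVec a r * Φ.mulVec b r ≤ δ / 2 * (∑ i, a i ^ 2 + ∑ i, b i ^ 2) := by
  have hsupp : ∀ (c : Fin n → ℝ), (∀ i, c i ≠ 0 → i ∈ S₁ ∪ S₂) →
      Ksparse (S₁.card + S₂.card) c := by
    intro c hc
    refine le_trans (Finset.card_le_card ?_) (Finset.card_union_le _ _)
    intro i hi
    simp only [Finset.mem_filter] at hi
    exact hc i hi.2
  have hp : Ksparse (S₁.card + S₂.card) (a + b) := by
    apply hsupp; intro i hi
    by_contra h
    simp only [Finset.mem_union, not_or] at h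
    simp [Pi.add_apply, ha i h.1, hb i h.2] at hi
  have hq : Ksparse (S₁.card + S₂.card) (a - b) := by
    apply hsupp; intro i hi
    by_contra h
    simp only [Finset.mem_union, not_or] at h
    simp [Pi.sub_apply, ha i h.1, hb i h.2] at hi
  obtain ⟨hP1, hP2⟩ := hRIP _ hp
  obtain ⟨hQ1, hQ2⟩ := hRIP _ hq
  have hcross : ∑ i, a i * b i = 0 := Finset.sum_eq_zero (fun i _ => by
    by_cases h : i ∈ S₁
    · rw [hb i (Finset.disjoint_left.mp hdisj h), mul_zero]
    · rw [ha i h, zero_mul])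
  have hps : ∑ i, (a + b) i ^ 2 = ∑ i, a i ^ 2 + ∑ i, b i ^ 2 := by
    have h1 : ∀ i : Fin n, (a + b) i ^ 2 = (a i ^ 2 + b i ^ 2) + 2 * (a i * b i) := by
      intro i; simp only [Pi.add_apply]; ring
    simp only [h1]
    rw [Finset.sum_add_distrib, Finset.sum_add_distrib, ← Finset.mul_sum, hcross]; ring
  have hqs : ∑ i, (a - b) i ^ 2 = ∑ i, a i ^ 2 + ∑ i, b i ^ 2 := by
    have h1 : ∀ i : Fin n, (a - b) i ^ 2 = (a i ^ 2 + b i ^ 2) - 2 * (a i * b i) := by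
      intro i; simp only [Pi.sub_apply]; ring
    simp only [h1]
    rw [Finset.sum_sub_distrib, Finset.sum_add_distrib, ← Finset.mul_sum, hcross]; ring
  have hPsum : ∑ r, (Φ.mulVec (a + b)) r ^ 2
      = (∑ r, Φ.mulVec a r ^ 2 + ∑ r, Φ.mulVec b r ^ 2)
        + 2 * ∑ r, Φ.mulVec a r * Φ.mulVec b r := by
    have h1 : ∀ r, (Φ.mulVec (a + b)) r ^ 2
        = (Φ.mulVec a r ^ 2 + Φ.mulVec b r ^ 2) + 2 * (Φ.mulVec a r * Φ.mulVec b r) := by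
      intro r; rw [Matrix.mulVec_add]; simp only [Pi.add_apply]; ring
    simp only [h1]
    rw [Finset.sum_add_distrib, Finset.sum_add_distrib, ← Finset.mul_sum]
  have hQsum : ∑ r, (Φ.mulVec (a - b)) r ^ 2
      = (∑ r, Φ.mulVec a r ^ 2 + ∑ r, Φ.mulVec b r ^ 2)
        - 2 * ∑ r, Φ.mulVec a r * Φ.mulVec b r := by
    have h1 : ∀ r, (Φ.mulVec (a - b)) r ^ 2
        = (Φ.mulVec a r ^ 2 + Φ.mulVec b r ^ 2) - 2 * (Φ.mulVec a r * Φ.mulVec b r) := by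
      intro r; rw [Matrix.mulVec_sub]; simp only [Pi.sub_apply]; ring
    simp only [h1]
    rw [Finset.sum_sub_distrib, Finset.sum_add_distrib, ← Finset.mul_sum]
  rw [hps] at hP2
  rw [hqs] at hQ1
  rw [hPsum] at hP2
  rw [hQsum] at hQ1
  linarith

/-- Lemma 3 (Candès): for disjoint `S₁, S₂` and `v` supported on `S₂`,
`‖Φ_{S₁}' Φ v‖₂ ≤ δ_{|S₁|+|S₂|} ‖v‖₂`. -/
theorem cross_correlation_bound {m n : ℕ} (Φ : Matrix (Fin m) (Fin n) ℝ)
    (S₁ S₂ : Finset (Fin n)) (hdisj : Disjoint S₁ S₂)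
    (δ : ℝ) (hδ0 : 0 ≤ δ) (hδ1 : δ < 1) (hRIP : RIP Φ (S₁.card + S₂.card) δ)
    (v : Fin n → ℝ) (hv : ∀ i, i ∉ S₂ → v i = 0) :
    l2 ((colSub Φ S₁)ᵀ.mulVec (Φ.mulVec v)) ≤ δ * l2 v := by
  set w : {i // i ∈ S₁} → ℝ := (colSub Φ S₁)ᵀ.mulVec (Φ.mulVec v) with hw
  have hwdef : ∀ j : {i // i ∈ S₁}, w j = ∑ r, Φ r j * Φ.mulVec v r := by
    intro j
    simp only [hw, Matrix.mulVec, dotProduct, Matrix.transpose_apply, colSub]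
  set x : Fin n → ℝ := fun i => if h : i ∈ S₁ then w ⟨i, h⟩ else 0 with hx
  have hxsupp : ∀ i, i ∉ S₁ → x i = 0 := fun i h => dif_neg h
  set A : ℝ := ∑ j : {i // i ∈ S₁}, w j ^ 2 with hA
  set B : ℝ := ∑ i, v i ^ 2 with hB
  have hA0 : 0 ≤ A := Finset.sum_nonneg (fun j _ => sq_nonneg _)
  have hB0 : 0 ≤ B := Finset.sum_nonneg (fun i _ => sq_nonneg _)
  -- sum of x² equals A
  have hxA : ∑ i, x i ^ 2 = A := by
    calc ∑ i, x i ^ 2 = ∑ i ∈ S₁, x i ^ 2 :=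
          (Finset.sum_subset (Finset.subset_univ S₁)
            (fun i _ hi => by rw [hxsupp i hi]; ring)).symm
      _ = ∑ j : {i // i ∈ S₁}, x (↑j) ^ 2 := (Finset.sum_coe_sort S₁ (fun i => x i ^ 2)).symm
      _ = A := Finset.sum_congr rfl (fun j _ => by simp [hx])
  have hΦx : ∀ r, Φ.mulVec x r = ∑ j : {i // i ∈ S₁}, Φ r (↑j) * w j := by
    intro r
    calc Φ.mulVec x r = ∑ i, Φ r i * x i := by
          simp only [Matrix.mulVec, dotProduct]
      _ = ∑ i ∈ S₁, Φ r i * x i :=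
          (Finset.sum_subset (Finset.subset_univ S₁)
            (fun i _ hi => by rw [hxsupp i hi]; ring)).symm
      _ = ∑ j : {i // i ∈ S₁}, Φ r (↑j) * x (↑j) :=
          (Finset.sum_coe_sort S₁ (fun i => Φ r i * x i)).symm
      _ = ∑ j : {i // i ∈ S₁}, Φ r (↑j) * w j :=
          Finset.sum_congr rfl (fun j _ => by simp [hx])
  have hinner : ∑ r, Φ.mulVec x r * Φ.mulVec v r = A := by
    calc ∑ r, Φ.mulVec x r * Φ.mulVec v r
        = ∑ r, ∑ j : {i // i ∈ S₁}, Φ r (↑j) * w j * Φ.mulVec v r :=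
          Finset.sum_congr rfl (fun r _ => by rw [hΦx r, Finset.sum_mul])
      _ = ∑ j : {i // i ∈ S₁}, ∑ r, Φ r (↑j) * w j * Φ.mulVec v r := Finset.sum_comm
      _ = ∑ j : {i // i ∈ S₁}, w j * ∑ r, Φ r (↑j) * Φ.mulVec v r :=
          Finset.sum_congr rfl (fun j _ => by
            rw [Finset.mul_sum]; exact Finset.sum_congr rfl (fun r _ => by ring))
      _ = A := by
          rw [hA]; exact Finset.sum_congr rfl (fun j _ => by rw [← hwdef j]; ring)
  have gl1 : l2 w = Real.sqrt A := rfl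
  have gl2 : l2 v = Real.sqrt B := rfl
  rw [gl1, gl2]
  rcases eq_or_lt_of_le hA0 with hAz | hApos
  · rw [← hAz, Real.sqrt_zero]
    positivity
  rcases eq_or_lt_of_le hB0 with hBz | hBpos
  · exfalso
    have hv0 : v = 0 := funext fun i => by
      have h := (Finset.sum_eq_zero_iff_of_nonneg
        (fun i _ => sq_nonneg (v i))).mp hBz.symm i (Finset.mem_univ i)
      exact pow_eq_zero_iff (two_ne_zero) |>.mp h
    have hA0' : A = 0 := by
      rw [hA]
      apply Finset.sum_eq_zero
      intro j _
      rw [hwdef j, hv0]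
      simp
    linarith
  set c : ℝ := Real.sqrt A / Real.sqrt B with hc
  have hcpos : 0 < c := div_pos (Real.sqrt_pos.mpr hApos) (Real.sqrt_pos.mpr hBpos)
  have hbsupp : ∀ i, i ∉ S₂ → (c • v) i = 0 := fun i h => by simp [hv i h]
  have key := cross_inner_le Φ S₁ S₂ hdisj δ hRIP x (c • v) hxsupp hbsupp
  have h1 : ∑ r, Φ.mulVec x r * Φ.mulVec (c • v) r = c * A := by
    rw [Matrix.mulVec_smul, ← hinner, Finset.mul_sum]
    exact Finset.sum_congr rfl (fun r _ => by simp [smul_eq_mul]; ring)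
  have h2 : ∑ i, (c • v) i ^ 2 = c ^ 2 * B := by
    rw [hB, Finset.mul_sum]
    exact Finset.sum_congr rfl (fun i _ => by simp [smul_eq_mul]; ring)
  have hc2 : c ^ 2 * B = A := by
    rw [hc, div_pow, Real.sq_sqrt hA0, Real.sq_sqrt hB0,
      div_mul_cancel₀ _ (ne_of_gt hBpos)]
  rw [hxA, h1, h2, hc2] at key
  have hcd : c ≤ δ := by nlinarith
  rw [hc, div_le_iff₀ (Real.sqrt_pos.mpr hBpos)] at hcd
  linarith
end

section
/- Let P be the orthogonal projection onto a subspace V of ℝ^m and P^⊥ = I − P. Then for any y ∈ ℝ^m and any vector φ, ‖P_{V+span(φ)} y‖₂² = ‖P y‖₂² + |⟨φ, P^⊥ y⟩|² / ‖P^⊥ φ‖₂², provided P^⊥ φ ≠ 0, where P_{V+span(φ)} is the orthogonal projection onto V + span(φ). -/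
/-!
Replacing `φ` by its residual `ψ = φ - P_V φ` does not change `V + span φ`, and `ψ ⊥ V`, so the
projection onto `V + span φ` splits as `P_V + P_ψ`. Pythagoras then gives
`‖P_V y‖² + ‖P_ψ y‖²`, where `‖P_ψ y‖² = ⟪ψ, y⟫² / ‖ψ‖²` and, by self-adjointness of `P_V`,
`⟪ψ, y⟫ = ⟪φ, y - P_V y⟫`.
-/

open RealInnerProductSpace

namespace Submodule

theorem sup_span_singleton_sub_of_mem {R M : Type*} [Ring R] [AddCommGroup M] [Module R M]
    {p : Submodule R M} {v : M} (hv : v ∈ p) (x : M) :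
    p ⊔ span R {x - v} = p ⊔ span R {x} := by
  have hx_sub : x - v ∈ p ⊔ span R {x} :=
    sub_mem (mem_sup_right (mem_span_singleton_self x)) (mem_sup_left hv)
  have hx : x ∈ p ⊔ span R {x - v} := by
    simpa using add_mem (mem_sup_right (mem_span_singleton_self (x - v))) (mem_sup_left hv)
  exact le_antisymm (sup_le le_sup_left ((span_singleton_le_iff_mem _ _).2 hx_sub))
    (sup_le le_sup_left ((span_singleton_le_iff_mem _ _).2 hx))

section

variable {𝕜 E : Type*} [RCLike 𝕜] [NormedAddCommGroup E] [InnerProductSpace 𝕜 E]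

local notation "⟪" x ", " y "⟫" => @inner 𝕜 _ _ x y

theorem IsOrtho.starProjection_sup_apply {U W : Submodule 𝕜 E} [U.HasOrthogonalProjection]
    [W.HasOrthogonalProjection] [(U ⊔ W).HasOrthogonalProjection] (h : U ⟂ W) (x : E) :
    (U ⊔ W).starProjection x = U.starProjection x + W.starProjection x := by
  refine eq_starProjection_of_mem_of_inner_eq_zero
    (add_mem (mem_sup_left (U.starProjection_apply_mem x))
      (mem_sup_right (W.starProjection_apply_mem x))) fun z hz => ?_
  obtain ⟨u, hu, w, hw, rfl⟩ := mem_sup.1 hz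
  have hU := U.starProjection_inner_eq_zero x u hu
  have hW := W.starProjection_inner_eq_zero x w hw
  have hUW : ⟪W.starProjection x, u⟫ = 0 := h.symm.inner_eq (W.starProjection_apply_mem x) hu
  have hWU : ⟪U.starProjection x, w⟫ = 0 := h.inner_eq (U.starProjection_apply_mem x) hw
  have hu' : ⟪x - (U.starProjection x + W.starProjection x), u⟫ = 0 := by
    rw [sub_add_eq_sub_sub, inner_sub_left, hU, hUW, sub_zero]
  have hw' : ⟪x - (U.starProjection x + W.starProjection x), w⟫ = 0 := by
    rw [add_comm, sub_add_eq_sub_sub, inner_sub_left, hW, hWU, sub_zero]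
  rw [inner_add_right, hu', hw', add_zero]

theorem inner_sub_starProjection_left_eq_right (K : Submodule 𝕜 E) [K.HasOrthogonalProjection]
    (u v : E) : ⟪u - K.starProjection u, v⟫ = ⟪u, v - K.starProjection v⟫ := by
  rw [inner_sub_left, inner_sub_right, inner_starProjection_left_eq_right]

end

theorem norm_starProjection_singleton_sq {F : Type*} [NormedAddCommGroup F]
    [InnerProductSpace ℝ F] (v w : F) :
    ‖(ℝ ∙ v).starProjection w‖ ^ 2 = ⟪v, w⟫ ^ 2 / ‖v‖ ^ 2 := by
  rcases eq_or_ne v 0 with rfl | hv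
  · simp
  rw [starProjection_singleton, RCLike.ofReal_real_eq_id, id, norm_smul, mul_pow,
    Real.norm_eq_abs, sq_abs]
  field_simp [norm_ne_zero_iff.2 hv]

end Submodule

theorem proj_enlarged_norm_sq_general {m : ℕ} (V : Submodule ℝ (EuclideanSpace ℝ (Fin m)))
    (y φ : EuclideanSpace ℝ (Fin m)) :
    ‖((V ⊔ Submodule.span ℝ {φ}).orthogonalProjectionOnto y : EuclideanSpace ℝ (Fin m))‖ ^ 2 =
      ‖(V.orthogonalProjectionOnto y : EuclideanSpace ℝ (Fin m))‖ ^ 2 +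
        ⟪φ, y - (V.orthogonalProjectionOnto y : EuclideanSpace ℝ (Fin m))⟫ ^ 2 /
          ‖φ - (V.orthogonalProjectionOnto φ : EuclideanSpace ℝ (Fin m))‖ ^ 2 := by
  simp only [Submodule.coe_orthogonalProjectionOnto_apply]
  set ψ := φ - V.starProjection φ
  have hVψ : V ⟂ ℝ ∙ ψ :=
    V.isOrtho_orthogonal_right.mono_right
      ((Submodule.span_singleton_le_iff_mem _ _).2 (V.sub_starProjection_mem_orthogonal φ))
  simp only [← Submodule.sup_span_singleton_sub_of_mem (V.starProjection_apply_mem φ) φ]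
  rw [hVψ.starProjection_sup_apply, norm_add_sq_real,
    hVψ.inner_eq (V.starProjection_apply_mem y) (Submodule.starProjection_apply_mem _ y),
    mul_zero, add_zero, Submodule.norm_starProjection_singleton_sq,
    Submodule.inner_sub_starProjection_left_eq_right]

/-- Key projection identity behind the MOLS selection rule:
`‖P_{V+span(φ)} y‖² = ‖P_V y‖² + ⟨φ, P_V^⊥ y⟩² / ‖P_V^⊥ φ‖²`. -/
theorem proj_enlarged_norm_sq {m : ℕ} (V : Submodule ℝ (EuclideanSpace ℝ (Fin m)))
    (y φ : EuclideanSpace ℝ (Fin m))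
    (hφ : φ - (V.orthogonalProjectionOnto φ : EuclideanSpace ℝ (Fin m)) ≠ 0) :
    ‖((V ⊔ Submodule.span ℝ {φ}).orthogonalProjectionOnto y : EuclideanSpace ℝ (Fin m))‖ ^ 2 =
      ‖(V.orthogonalProjectionOnto y : EuclideanSpace ℝ (Fin m))‖ ^ 2 +
        ⟪φ, y - (V.orthogonalProjectionOnto y : EuclideanSpace ℝ (Fin m))⟫ ^ 2 /
          ‖φ - (V.orthogonalProjectionOnto φ : EuclideanSpace ℝ (Fin m))‖ ^ 2 :=
  proj_enlarged_norm_sq_general V y φ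
end

section
/- Let Φ ∈ ℝ^{m×n} have restricted isometry constant δ_{K+L} < √L/(√K + √L) for integers 1 ≤ L ≤ K, and let x be a nonzero K-sparse vector with support T, y = Φx. If T¹ ⊆ {1,…,n} with |T¹| = L maximizes ‖Φ'_S y‖₂ over all sets S of size L, then T¹ ∩ T ≠ ∅. -/
open Finset Matrix

/-- There is a subset of `T` of size `L` consisting of the `L` largest values of `v`. -/
lemma exists_top_subset {α : Type*} [DecidableEq α] (v : α → ℝ) :
    ∀ (L : ℕ) (T : Finset α), L ≤ T.card →
      ∃ S, S ⊆ T ∧ S.card = L ∧ ∀ i ∈ S, ∀ j ∈ T \ S, v j ≤ v i := by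
  intro L
  induction L with
  | zero => exact fun T _ => ⟨∅, empty_subset _, rfl, by simp⟩
  | succ L ih =>
    intro T hT
    have hne : T.Nonempty := card_pos.mp (by omega)
    obtain ⟨i₀, hi₀T, hi₀⟩ := Finset.exists_max_image T v hne
    obtain ⟨S', hS'sub, hS'card, hS'⟩ := ih (T.erase i₀)
      (by rw [card_erase_of_mem hi₀T]; omega)
    refine ⟨insert i₀ S', ?_, ?_, ?_⟩
    · exact insert_subset hi₀T (hS'sub.trans (erase_subset _ _))
    · rw [card_insert_of_notMem (fun h => (mem_erase.mp (hS'sub h)).1 rfl), hS'card]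
    · intro i hi j hj
      rcases mem_insert.mp hi with rfl | hiS'
      · exact hi₀ j (mem_sdiff.mp hj).1
      · refine hS' i hiS' j ?_
        rw [mem_sdiff] at hj ⊢
        exact ⟨mem_erase.mpr ⟨fun h => hj.2 (h ▸ mem_insert_self i₀ S'), hj.1⟩,
          fun h => hj.2 (mem_insert_of_mem h)⟩

/-- Averaging bound for a top subset. -/
lemma top_subset_avg {α : Type*} [DecidableEq α] (v : α → ℝ) (hv : ∀ i, 0 ≤ v i)
    (T S : Finset α) (hsub : S ⊆ T)
    (htop : ∀ i ∈ S, ∀ j ∈ T \ S, v j ≤ v i) :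
    (S.card : ℝ) * ∑ j ∈ T, v j ≤ (T.card : ℝ) * ∑ i ∈ S, v i := by
  have key : (S.card : ℝ) * ∑ j ∈ T \ S, v j ≤ ((T \ S).card : ℝ) * ∑ i ∈ S, v i := by
    calc (S.card : ℝ) * ∑ j ∈ T \ S, v j = ∑ i ∈ S, ∑ j ∈ T \ S, v j := by
          rw [Finset.sum_const, nsmul_eq_mul]
      _ ≤ ∑ i ∈ S, ∑ j ∈ T \ S, v i :=
          Finset.sum_le_sum fun i hi => Finset.sum_le_sum fun j hj => htop i hi j hj
      _ = ((T \ S).card : ℝ) * ∑ i ∈ S, v i := by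
          simp [Finset.sum_const, nsmul_eq_mul, Finset.mul_sum, mul_comm]
          rw [← Finset.sum_mul]
  have hcard : ((T \ S).card : ℝ) + S.card = T.card := by
    exact_mod_cast congrArg (Nat.cast (R := ℝ)) (Finset.card_sdiff_add_card_eq_card hsub)
  have hsplit : ∑ j ∈ T, v j = ∑ j ∈ T \ S, v j + ∑ j ∈ S, v j := by
    rw [Finset.sum_sdiff hsub]
  nlinarith [Finset.sum_nonneg (fun i (_ : i ∈ S) => hv i)]

/-- Cross inner-product bound from RIP for vectors with disjoint supports. -/
lemma rip_cross {m n : ℕ} (Φ : Matrix (Fin m) (Fin n) ℝ) (N : ℕ) (δ : ℝ)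
    (hRIP : RIP Φ N δ) (u v : Fin n → ℝ)
    (hdisj : ∀ i, u i = 0 ∨ v i = 0)
    (hcard : (Finset.univ.filter (fun i => u i ≠ 0)).card
      + (Finset.univ.filter (fun i => v i ≠ 0)).card ≤ N) :
    4 * ∑ r, (Φ.mulVec u) r * (Φ.mulVec v) r ≤ 2 * δ * (∑ i, u i ^ 2 + ∑ i, v i ^ 2) := by
  have hsubadd : ∀ c : ℝ, (Finset.univ.filter (fun i => u i + c * v i ≠ 0)).card ≤ N := by
    intro c
    have hsub : (Finset.univ.filter (fun i => u i + c * v i ≠ 0)) ⊆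
        (Finset.univ.filter (fun i => u i ≠ 0)) ∪ (Finset.univ.filter (fun i => v i ≠ 0)) := by
      intro i hi
      simp only [mem_filter, mem_union, mem_univ, true_and] at hi ⊢
      by_contra h
      push_neg at h
      rw [h.1, h.2] at hi
      simp at hi
    calc _ ≤ _ := Finset.card_le_card hsub
      _ ≤ _ := Finset.card_union_le _ _
      _ ≤ N := hcard
  have hspa : Ksparse N (u + v) := by simpa [Ksparse] using hsubadd 1
  have hspb : Ksparse N (u - v) := by
    have := hsubadd (-1)
    unfold Ksparse
    convert this using 3 with i
    simp [sub_eq_add_neg]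
  have hnorm : ∀ c : ℝ, c ^ 2 = 1 → ∑ i, (u i + c * v i) ^ 2
      = ∑ i, u i ^ 2 + ∑ i, v i ^ 2 := by
    intro c hc
    rw [← Finset.sum_add_distrib]
    refine Finset.sum_congr rfl fun i _ => ?_
    rcases hdisj i with h | h
    · rw [h]; nlinarith [hc]
    · rw [h]; ring
  have ha := (hRIP (u + v) hspa).2
  have hb := (hRIP (u - v) hspb).1
  have hA : ∑ i, (u + v) i ^ 2 = ∑ i, u i ^ 2 + ∑ i, v i ^ 2 := by
    rw [← hnorm 1 (by norm_num)]
    exact Finset.sum_congr rfl fun i _ => by simp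
  have hB : ∑ i, (u - v) i ^ 2 = ∑ i, u i ^ 2 + ∑ i, v i ^ 2 := by
    rw [← hnorm (-1) (by norm_num)]
    refine Finset.sum_congr rfl fun i _ => ?_
    simp [sub_eq_add_neg]
  rw [hA] at ha
  rw [hB] at hb
  have hexp : ∑ i, (Φ.mulVec (u + v)) i ^ 2 - ∑ i, (Φ.mulVec (u - v)) i ^ 2
      = 4 * ∑ r, (Φ.mulVec u) r * (Φ.mulVec v) r := by
    rw [Matrix.mulVec_add, Matrix.mulVec_sub, ← Finset.sum_sub_distrib, Finset.mul_sum]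
    refine Finset.sum_congr rfl fun r _ => ?_
    simp only [Pi.add_apply, Pi.sub_apply]
    ring
  linarith

/-- MOLS first iteration success. -/
theorem mols_first_iteration_success {m n : ℕ} (Φ : Matrix (Fin m) (Fin n) ℝ)
    (hunit : ∀ j, ∑ r, Φ r j ^ 2 = 1)
    (K L : ℕ) (hL1 : 1 ≤ L) (hLK : L ≤ K)
    (δ : ℝ) (hδ0 : 0 ≤ δ)
    (hδ : δ < Real.sqrt L / (Real.sqrt K + Real.sqrt L))
    (hRIP : RIP Φ (K + L) δ)
    (x : Fin n → ℝ) (hx : x ≠ 0)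
    (T : Finset (Fin n)) (hT : T = Finset.univ.filter (fun i => x i ≠ 0))
    (hK : T.card = K)
    (T1 : Finset (Fin n)) (hT1 : T1.card = L)
    (hmax : ∀ S : Finset (Fin n), S.card = L →
      l2 ((colSub Φ S)ᵀ.mulVec (Φ.mulVec x)) ≤ l2 ((colSub Φ T1)ᵀ.mulVec (Φ.mulVec x))) :
    (T1 ∩ T).Nonempty := by
  by_contra hcon
  rw [Finset.not_nonempty_iff_eq_empty] at hcon
  set y : Fin m → ℝ := Φ.mulVec x with hy
  set g : Fin n → ℝ := fun i => ∑ r, Φ r i * y r with hg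
  set X : ℝ := ∑ i, x i ^ 2 with hXdef
  -- basic positivity facts
  have hLpos : (0:ℝ) < Real.sqrt L := Real.sqrt_pos.mpr (by exact_mod_cast hL1)
  have hKpos : (0:ℝ) < Real.sqrt K := Real.sqrt_pos.mpr (by exact_mod_cast (by omega : 0 < K))
  have hδ1 : δ < 1 := by
    refine lt_of_lt_of_le hδ ?_
    rw [div_le_one (by linarith)]
    linarith
  have hX0 : 0 < X := by
    obtain ⟨i, hi⟩ := Function.ne_iff.mp hx
    exact Finset.sum_pos' (fun i _ => sq_nonneg _)
      ⟨i, Finset.mem_univ i, lt_of_le_of_ne (sq_nonneg _) (Ne.symm (pow_ne_zero 2 hi))⟩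
  have hxmem : ∀ i, i ∉ T → x i = 0 := by
    intro i hi
    by_contra h
    exact hi (hT ▸ Finset.mem_filter.mpr ⟨Finset.mem_univ _, h⟩)
  -- inner products with y
  have hip : ∀ u : Fin n → ℝ, ∑ r, (Φ.mulVec u) r * y r = ∑ i, u i * g i := by
    intro u
    have hmv : ∀ r, (Φ.mulVec u) r = ∑ i, Φ r i * u i := fun r => rfl
    simp only [hmv]
    calc ∑ r, (∑ i, Φ r i * u i) * y r = ∑ r, ∑ i, Φ r i * u i * y r := by
          exact Finset.sum_congr rfl fun r _ => Finset.sum_mul _ _ _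
      _ = ∑ i, ∑ r, Φ r i * u i * y r := Finset.sum_comm
      _ = ∑ i, u i * g i := by
          refine Finset.sum_congr rfl fun i _ => ?_
          rw [hg, Finset.mul_sum]
          exact Finset.sum_congr rfl fun r _ => by ring
  -- the column sums in terms of g
  have hcol : ∀ S' : Finset (Fin n),
      ∑ c : {i // i ∈ S'}, ((colSub Φ S')ᵀ.mulVec y) c ^ 2 = ∑ i ∈ S', g i ^ 2 := by
    intro S'
    rw [← Finset.sum_coe_sort S' (fun i => g i ^ 2)]
    refine Finset.sum_congr rfl fun c _ => ?_
    congr 1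
  -- RIP lower bound on ‖y‖²
  have hxs : Ksparse (K + L) x := by
    unfold Ksparse
    rw [← hT, hK]
    omega
  have hRIPx : (1 - δ) * X ≤ ∑ r, y r ^ 2 := by
    have := (hRIP x hxs).1
    rw [← hy] at this
    exact this
  -- ⟨x, g⟩ over T equals ‖y‖²
  have hxT : ∑ i ∈ T, x i ^ 2 = X := by
    refine Finset.sum_subset (Finset.subset_univ T) fun i _ hi => ?_
    rw [hxmem i hi]
    ring
  have hxgT : ∑ i ∈ T, x i * g i = ∑ r, y r ^ 2 := by
    have h1 : ∑ i ∈ T, x i * g i = ∑ i, x i * g i := by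
      refine Finset.sum_subset (Finset.subset_univ T) fun i _ hi => ?_
      rw [hxmem i hi]
      ring
    rw [h1, ← hip x, ← hy]
    exact Finset.sum_congr rfl fun r _ => by ring
  -- Cauchy–Schwarz lower bound on ∑_T g²
  have hTg : (1 - δ) ^ 2 * X ≤ ∑ i ∈ T, g i ^ 2 := by
    have hCS := Finset.sum_mul_sq_le_sq_mul_sq T x g
    rw [hxT, hxgT] at hCS
    have h0 : (0:ℝ) ≤ (1 - δ) * X := mul_nonneg (by linarith) hX0.le
    have h1 : ((1 - δ) * X) ^ 2 ≤ (∑ r, y r ^ 2) ^ 2 := pow_le_pow_left₀ h0 hRIPx 2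
    have h2 : ((1 - δ) * X) ^ 2 ≤ X * ∑ i ∈ T, g i ^ 2 := h1.trans hCS
    have h2' : ((1 - δ) ^ 2 * X) * X ≤ (∑ i ∈ T, g i ^ 2) * X := by linarith only [h2]
    exact le_of_mul_le_mul_right h2' hX0
  -- choose the top-L subset S of T
  obtain ⟨S, hSsub, hScard, hStop⟩ := exists_top_subset (fun i => g i ^ 2) L T (by omega)
  have havg := top_subset_avg (fun i => g i ^ 2) (fun i => sq_nonneg _) T S hSsub hStop
  rw [hScard, hK] at havg
  have havg' : (L : ℝ) * ∑ j ∈ T, g j ^ 2 ≤ (K : ℝ) * ∑ i ∈ S, g i ^ 2 := havg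
  -- W := ∑_{T1} g²  and the maximality bound
  set W : ℝ := ∑ i ∈ T1, g i ^ 2 with hWdef
  have hW0 : 0 ≤ W := Finset.sum_nonneg fun i _ => sq_nonneg _
  have hmaxS : ∑ i ∈ S, g i ^ 2 ≤ W := by
    have h := hmax S hScard
    unfold l2 at h
    rw [hcol S, hcol T1] at h
    exact (Real.sqrt_le_sqrt_iff (by positivity)).mp h
  have hKW : (L : ℝ) * ((1 - δ) ^ 2 * X) ≤ (K : ℝ) * W := by
    have hLcast : (1:ℝ) ≤ (L:ℝ) := by exact_mod_cast hL1
    have h1 : (L : ℝ) * ((1 - δ) ^ 2 * X) ≤ (L : ℝ) * ∑ i ∈ T, g i ^ 2 :=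
      mul_le_mul_of_nonneg_left hTg (by positivity)
    have h2 : (K : ℝ) * ∑ i ∈ S, g i ^ 2 ≤ (K : ℝ) * W :=
      mul_le_mul_of_nonneg_left hmaxS (by positivity)
    linarith only [h1, h2, havg']
  have hWpos : 0 < W := by
    have hLcast : (1:ℝ) ≤ (L:ℝ) := by exact_mod_cast hL1
    have hKcast : (0:ℝ) < (K:ℝ) := by exact_mod_cast (by omega : 0 < K)
    have hpos : 0 < (L : ℝ) * ((1 - δ) ^ 2 * X) :=
      mul_pos (by linarith) (mul_pos (pow_pos (by linarith) 2) hX0)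
    by_contra hn
    push_neg at hn
    have : (K : ℝ) * W ≤ 0 := mul_nonpos_of_nonneg_of_nonpos hKcast.le hn
    linarith
  -- define the extension w of the restricted correlation vector
  set w : Fin n → ℝ := fun i => if i ∈ T1 then g i else 0 with hwdef
  have hwsum : ∑ i, w i ^ 2 = W := by
    rw [hWdef, hwdef]
    rw [← Finset.sum_filter_add_sum_filter_not Finset.univ (fun i => i ∈ T1)]
    have e1 : ∑ i ∈ Finset.univ.filter (fun i => i ∈ T1),
        (if i ∈ T1 then g i else 0) ^ 2 = ∑ i ∈ T1, g i ^ 2 := by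
      rw [Finset.filter_mem_eq_inter, Finset.univ_inter]
      exact Finset.sum_congr rfl fun i hi => by rw [if_pos hi]
    have e2 : ∑ i ∈ Finset.univ.filter (fun i => i ∉ T1),
        (if i ∈ T1 then g i else 0) ^ 2 = 0 := by
      refine Finset.sum_eq_zero fun i hi => ?_
      rw [if_neg (Finset.mem_filter.mp hi).2]
      ring
    rw [e1, e2, add_zero]
  have hwg : ∑ r, (Φ.mulVec w) r * y r = W := by
    rw [hip w, hWdef]
    have : ∑ i, w i * g i = ∑ i, (if i ∈ T1 then g i ^ 2 else 0) := by
      refine Finset.sum_congr rfl fun i _ => ?_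
      rw [hwdef]
      by_cases h : i ∈ T1 <;> simp [h, pow_two]
    rw [this, Finset.sum_ite_mem, Finset.univ_inter]
  -- disjointness of supports
  have hdisjTT : ∀ i, i ∈ T1 → i ∉ T := by
    intro i hi1 hiT
    have : i ∈ T1 ∩ T := Finset.mem_inter.mpr ⟨hi1, hiT⟩
    rw [hcon] at this
    exact absurd this (Finset.notMem_empty i)
  -- apply the cross bound to scaled vectors
  set a : ℝ := Real.sqrt X with hadef
  set b : ℝ := Real.sqrt W with hbdef
  have ha0 : 0 < a := Real.sqrt_pos.mpr hX0
  have hb0 : 0 < b := Real.sqrt_pos.mpr hWpos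
  have ha2 : a ^ 2 = X := Real.sq_sqrt hX0.le
  have hb2 : b ^ 2 = W := Real.sq_sqrt hWpos.le
  have hcross := rip_cross Φ (K + L) δ hRIP (a • w) (b • x)
    (by
      intro i
      by_cases h : i ∈ T1
      · right
        have := hxmem i (hdisjTT i h)
        simp [this]
      · left
        simp [hwdef, h])
    (by
      have h1 : Finset.univ.filter (fun i => (a • w) i ≠ 0) ⊆ T1 := by
        intro i hi
        simp only [Finset.mem_filter, Pi.smul_apply, smul_eq_mul] at hi
        by_contra h
        rw [hwdef] at hi
        simp [h] at hi
      have h2 : Finset.univ.filter (fun i => (b • x) i ≠ 0) ⊆ T := by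
        intro i hi
        simp only [Finset.mem_filter, Pi.smul_apply, smul_eq_mul] at hi
        by_contra h
        rw [hxmem i h] at hi
        simp at hi
      calc _ ≤ T1.card + T.card := Nat.add_le_add (Finset.card_le_card h1) (Finset.card_le_card h2)
        _ ≤ K + L := by omega)
  -- compute the three sums appearing in hcross
  have hsum1 : ∑ i, (a • w) i ^ 2 = X * W := by
    have : ∀ i, (a • w) i ^ 2 = a ^ 2 * w i ^ 2 := fun i => by
      simp [Pi.smul_apply, smul_eq_mul]; ring
    simp only [this]
    rw [← Finset.mul_sum, hwsum, ha2]
  have hsum2 : ∑ i, (b • x) i ^ 2 = W * X := by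
    have : ∀ i, (b • x) i ^ 2 = b ^ 2 * x i ^ 2 := fun i => by
      simp [Pi.smul_apply, smul_eq_mul]; ring
    simp only [this]
    rw [← Finset.mul_sum, hb2, ← hXdef]
  have hsum3 : ∑ r, (Φ.mulVec (a • w)) r * (Φ.mulVec (b • x)) r = a * b * W := by
    rw [Matrix.mulVec_smul, Matrix.mulVec_smul, ← hy]
    have : ∀ r, (a • Φ.mulVec w) r * (b • y) r = a * b * ((Φ.mulVec w) r * y r) := fun r => by
      simp [Pi.smul_apply, smul_eq_mul]; ring
    simp only [this]
    rw [← Finset.mul_sum, hwg]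
  clear_value a b W X
  rw [hsum1, hsum2, hsum3] at hcross
  -- deduce W ≤ δ² X
  have h1 : (a * b) * W ≤ (δ * X) * W := by linarith only [hcross]
  have h2 : a * b ≤ δ * X := le_of_mul_le_mul_right h1 hWpos
  have hXa : X = a * a := by rw [← ha2]; ring
  rw [hXa] at h2
  have h4 : a * b ≤ a * (δ * a) := by linarith only [h2]
  have hba : b ≤ δ * a := le_of_mul_le_mul_left h4 ha0
  have h5 : b * b ≤ (δ * a) * (δ * a) :=
    mul_le_mul hba hba hb0.le (by positivity)
  have hWle : W ≤ δ ^ 2 * X := by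
    rw [← hb2, ← ha2]
    nlinarith [h5]
  -- combine: L (1-δ)² ≤ K δ²
  have h6 : (K : ℝ) * W ≤ (K : ℝ) * (δ ^ 2 * X) :=
    mul_le_mul_of_nonneg_left hWle (by positivity)
  have h7 : ((L : ℝ) * (1 - δ) ^ 2) * X ≤ ((K : ℝ) * δ ^ 2) * X := by
    linarith only [hKW, h6]
  have hfinal : (L : ℝ) * (1 - δ) ^ 2 ≤ (K : ℝ) * δ ^ 2 :=
    le_of_mul_le_mul_right h7 hX0
  -- take square roots
  have hsq : Real.sqrt L * (1 - δ) ≤ Real.sqrt K * δ := by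
    have h1 : Real.sqrt ((L : ℝ) * (1 - δ) ^ 2) ≤ Real.sqrt ((K : ℝ) * δ ^ 2) :=
      Real.sqrt_le_sqrt hfinal
    rwa [Real.sqrt_mul (by positivity) _, Real.sqrt_mul (by positivity) _,
      Real.sqrt_sq (by linarith), Real.sqrt_sq hδ0] at h1
  have hcontra : δ * (Real.sqrt K + Real.sqrt L) < Real.sqrt L :=
    (lt_div_iff₀ (by linarith)).mp hδ
  linarith only [hsq, hcontra]
end

section
/- Let y ∈ ℝ^m, T a set of K indices, and suppose T¹ maximizes ‖Φ'_S y‖₂ over all subsets S of {1,…,n} of size L ≤ K. Then ‖Φ'_{T¹} y‖₂ ≥ √(L/K) ‖Φ'_T y‖₂. -/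
open Finset Matrix

/-- The maximizer over size-`L` sets captures at least a `√(L/K)` fraction of the
correlation energy over any size-`K` set `T`. -/
theorem maximizer_correlation_lower_bound {m n : ℕ} (Φ : Matrix (Fin m) (Fin n) ℝ)
    (y : Fin m → ℝ) (K L : ℕ) (hLK : L ≤ K)
    (T T1 : Finset (Fin n)) (hT : T.card = K) (hT1 : T1.card = L)
    (hmax : ∀ S : Finset (Fin n), S.card = L →
      l2 ((colSub Φ S)ᵀ.mulVec y) ≤ l2 ((colSub Φ T1)ᵀ.mulVec y)) :
    Real.sqrt ((L : ℝ) / K) * l2 ((colSub Φ T)ᵀ.mulVec y) ≤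
      l2 ((colSub Φ T1)ᵀ.mulVec y) := by
  classical
  set f : Fin n → ℝ := fun j => (∑ r, Φ r j * y r) ^ 2 with hf
  have hfnn : ∀ j, 0 ≤ f j := fun j => sq_nonneg _
  have hl2 : ∀ S : Finset (Fin n),
      l2 ((colSub Φ S)ᵀ.mulVec y) = Real.sqrt (∑ j ∈ S, f j) := by
    intro S
    unfold l2
    congr 1
    rw [← Finset.sum_coe_sort S f]
    apply Finset.sum_congr rfl
    intro i _
    simp [Matrix.mulVec, Matrix.transpose, colSub, dotProduct, f]
  rw [hl2, hl2]
  rcases Nat.eq_zero_or_pos L with hL0 | hLpos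
  · subst hL0
    simp only [Nat.cast_zero, zero_div, Real.sqrt_zero, zero_mul]
    exact Real.sqrt_nonneg _
  have hKpos : 0 < K := lt_of_lt_of_le hLpos hLK
  -- pick S ⊆ T of size L maximizing the sum
  have hne : (T.powersetCard L).Nonempty :=
    Finset.powersetCard_nonempty.mpr (hT ▸ hLK)
  obtain ⟨S, hSmem, hSmax⟩ :=
    Finset.exists_max_image (T.powersetCard L) (fun S => ∑ j ∈ S, f j) hne
  obtain ⟨hST, hScard⟩ := Finset.mem_powersetCard.mp hSmem
  -- exchange argument
  have hkey : ∀ i ∈ S, ∀ j ∈ T \ S, f j ≤ f i := by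
    intro i hi j hj
    obtain ⟨hjT, hjS⟩ := Finset.mem_sdiff.mp hj
    have hjne : j ∉ S.erase i := fun h => hjS (Finset.mem_of_mem_erase h)
    have hS'card : (insert j (S.erase i)).card = L := by
      rw [Finset.card_insert_of_notMem hjne, Finset.card_erase_of_mem hi, hScard]
      omega
    have hS'sub : insert j (S.erase i) ⊆ T :=
      Finset.insert_subset hjT ((Finset.erase_subset i S).trans hST)
    have h := hSmax _ (Finset.mem_powersetCard.mpr ⟨hS'sub, hS'card⟩)
    rw [Finset.sum_insert hjne] at h
    have herase : ∑ x ∈ S.erase i, f x = (∑ x ∈ S, f x) - f i := by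
      have := Finset.sum_erase_add S f hi
      linarith
    rw [herase] at h
    linarith
  obtain ⟨i0, hi0, hi0min⟩ :=
    Finset.exists_min_image S f (Finset.card_pos.mp (hScard ▸ hLpos))
  have h1 : ∑ j ∈ T \ S, f j ≤ ((K : ℝ) - L) * f i0 := by
    have hcard : (T \ S).card = K - L := by
      rw [Finset.card_sdiff_of_subset hST, hT, hScard]
    calc ∑ j ∈ T \ S, f j ≤ ∑ _j ∈ T \ S, f i0 :=
          Finset.sum_le_sum (fun j hj => hkey i0 hi0 j hj)
      _ = ((K - L : ℕ) : ℝ) * f i0 := by rw [Finset.sum_const, nsmul_eq_mul]; rw [hcard]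
      _ = ((K : ℝ) - L) * f i0 := by rw [Nat.cast_sub hLK]
  have h2 : (L : ℝ) * f i0 ≤ ∑ j ∈ S, f j := by
    calc (L : ℝ) * f i0 = ((S.card : ℕ) : ℝ) * f i0 := by rw [hScard]
      _ = ∑ _j ∈ S, f i0 := by rw [Finset.sum_const, nsmul_eq_mul]
      _ ≤ ∑ j ∈ S, f j := Finset.sum_le_sum (fun j hj => hi0min j hj)
  have hsplit : ∑ j ∈ T, f j = (∑ j ∈ S, f j) + ∑ j ∈ T \ S, f j := by
    rw [← Finset.sum_sdiff hST]; ring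
  have hmain : (L : ℝ) * ∑ j ∈ T, f j ≤ (K : ℝ) * ∑ j ∈ S, f j := by
    have hLle : (L : ℝ) ≤ K := Nat.cast_le.mpr hLK
    have hLnn : (0 : ℝ) ≤ L := Nat.cast_nonneg L
    have hfnn0 : 0 ≤ f i0 := hfnn i0
    nlinarith [h1, h2, hsplit]
  -- conclude
  have hTnn : 0 ≤ ∑ j ∈ T, f j := Finset.sum_nonneg (fun j _ => hfnn j)
  have hdiv : (L : ℝ) / K * ∑ j ∈ T, f j ≤ ∑ j ∈ S, f j := by
    rw [div_mul_eq_mul_div, div_le_iff₀ (by positivity : (0:ℝ) < K)]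
    linarith [hmain]
  calc Real.sqrt ((L : ℝ) / K) * Real.sqrt (∑ j ∈ T, f j)
      = Real.sqrt ((L : ℝ) / K * ∑ j ∈ T, f j) :=
        (Real.sqrt_mul (by positivity) _).symm
    _ ≤ Real.sqrt (∑ j ∈ S, f j) := Real.sqrt_le_sqrt hdiv
    _ ≤ Real.sqrt (∑ j ∈ T1, f j) := by
        have := hmax S hScard
        rw [hl2, hl2] at this
        exact this
end

section
/- Let T ⊆ {1,…,n} with |T| = K, δ_K < 1, y = Φx + v with supp(x) = T, and define x̂ supported on T by x̂_T = Φ_T^† y. Then ‖x̂ − x‖₂ ≤ ‖v‖₂/√(1−δ_K). -/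
/-!
Since `y = Φ_T x_T + v` and `Φ_T^† Φ_T = 1`, the error on `T` is `x̂_T - x_T = Φ_T^† v`.
The lower RIP bound applied to this vector gives
`(1 - δ) ‖Φ_T^† v‖² ≤ ‖Φ_T Φ_T^† v‖² = ‖P_T v‖² ≤ ‖v‖²`,
the last step because `P_T` is an orthogonal projection: `‖P_T v‖² = ⟨P_T v, v⟩`, and
Cauchy–Schwarz. The same lower bound makes `Φ_T'Φ_T` invertible, so `Φ_T^†` is a genuine
left inverse.
-/

open Finset Matrix

lemma sum_sq_eq_dotProduct_self {ι : Type*} [Fintype ι] (u : ι → ℝ) :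
    ∑ i, u i ^ 2 = u ⬝ᵥ u := by
  simp only [dotProduct, sq]

lemma dotProduct_self_le_of_dotProduct_self_eq {ι : Type*} [Fintype ι] {u v : ι → ℝ}
    (h : u ⬝ᵥ u = u ⬝ᵥ v) : u ⬝ᵥ u ≤ v ⬝ᵥ v := by
  have hcs : (u ⬝ᵥ v) ^ 2 ≤ (u ⬝ᵥ u) * (v ⬝ᵥ v) := by
    simpa only [dotProduct, sq] using Finset.sum_mul_sq_le_sq_mul_sq Finset.univ u v
  have hu : 0 ≤ u ⬝ᵥ u := by rw [← sum_sq_eq_dotProduct_self]; positivity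
  have hv : 0 ≤ v ⬝ᵥ v := by rw [← sum_sq_eq_dotProduct_self]; positivity
  rw [← h, sq] at hcs
  nlinarith

section Support

variable {n : ℕ} {T : Finset (Fin n)} {x : Fin n → ℝ}

lemma sum_sq_eq_sum_subtype_of_support_subset (hx : ∀ i, i ∉ T → x i = 0) :
    ∑ i, x i ^ 2 = ∑ j : T, x j ^ 2 := by
  rw [Finset.sum_coe_sort T (fun i => x i ^ 2)]
  exact (Finset.sum_subset T.subset_univ fun i _ hi => by simp [hx i hi]).symm

lemma mulVec_eq_colSub_mulVec_of_support_subset {m : ℕ} (Φ : Matrix (Fin m) (Fin n) ℝ)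
    (hx : ∀ i, i ∉ T → x i = 0) :
    Φ *ᵥ x = colSub Φ T *ᵥ fun j : T => x j := by
  funext r
  simp only [mulVec, dotProduct, colSub]
  rw [Finset.sum_coe_sort T (fun i => Φ r i * x i)]
  exact (Finset.sum_subset T.subset_univ fun i _ hi => by simp [hx i hi]).symm

lemma ksparse_of_support_subset {K : ℕ} (hT : T.card ≤ K) (hx : ∀ i, i ∉ T → x i = 0) :
    Ksparse K x := by
  refine le_trans (Finset.card_le_card fun i hi => ?_) hT
  by_contra hiT
  exact (Finset.mem_filter.mp hi).2 (hx i hiT)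

end Support

section LeastSquares

variable {m n : ℕ} {Φ : Matrix (Fin m) (Fin n) ℝ} {K : ℕ} {δ : ℝ} {T : Finset (Fin n)}

lemma RIP.sum_sq_le_colSub (hRIP : RIP Φ K δ) (hT : T.card ≤ K) (z : T → ℝ) :
    (1 - δ) * ∑ j, z j ^ 2 ≤ ∑ r, (colSub Φ T *ᵥ z) r ^ 2 := by
  set x : Fin n → ℝ := fun i => if h : i ∈ T then z ⟨i, h⟩ else 0
  have hx : ∀ i, i ∉ T → x i = 0 := fun i hi => dif_neg hi
  have hxz : ∀ j : T, x j = z j := fun j => dif_pos j.2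
  have h := (hRIP x (ksparse_of_support_subset hT hx)).1
  rw [sum_sq_eq_sum_subtype_of_support_subset hx,
    mulVec_eq_colSub_mulVec_of_support_subset Φ hx] at h
  simpa only [hxz] using h

lemma dotProduct_gram_mulVec (z w : T → ℝ) :
    z ⬝ᵥ gram Φ T *ᵥ w = (colSub Φ T *ᵥ z) ⬝ᵥ (colSub Φ T *ᵥ w) := by
  rw [_root_.gram, ← mulVec_mulVec, dotProduct_mulVec, vecMul_transpose]

lemma RIP.isUnit_det_gram (hRIP : RIP Φ K δ) (hδ : δ < 1) (hT : T.card ≤ K) :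
    IsUnit (gram Φ T).det := by
  rw [isUnit_iff_ne_zero]
  intro hdet
  obtain ⟨z, hz, hGz⟩ := exists_mulVec_eq_zero_iff.mpr hdet
  have hAz : ∑ r, (colSub Φ T *ᵥ z) r ^ 2 = 0 := by
    rw [sum_sq_eq_dotProduct_self, ← dotProduct_gram_mulVec, hGz, dotProduct_zero]
  have hz0 : ∑ j, z j ^ 2 ≤ 0 := by nlinarith [hRIP.sum_sq_le_colSub hT z]
  refine hz (dotProduct_self_eq_zero.mp ?_)
  rw [← sum_sq_eq_dotProduct_self]
  exact le_antisymm hz0 (by positivity)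

lemma pinv_mul_colSub (hG : IsUnit (gram Φ T).det) : pinv Φ T * colSub Φ T = 1 := by
  rw [pinv, Matrix.mul_assoc]
  exact nonsing_inv_mul _ hG

lemma proj_mulVec_dotProduct_self (hG : IsUnit (gram Φ T).det) (v : Fin m → ℝ) :
    (proj Φ T *ᵥ v) ⬝ᵥ (proj Φ T *ᵥ v) = (proj Φ T *ᵥ v) ⬝ᵥ v := by
  have hGpinv : gram Φ T * pinv Φ T = (colSub Φ T)ᵀ := by
    rw [pinv, ← Matrix.mul_assoc, mul_nonsing_inv _ hG, Matrix.one_mul]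
  rw [proj, ← mulVec_mulVec, ← dotProduct_gram_mulVec, mulVec_mulVec, hGpinv,
    dotProduct_mulVec, vecMul_transpose]

lemma sum_sq_proj_mulVec_le (hG : IsUnit (gram Φ T).det) (v : Fin m → ℝ) :
    ∑ r, (proj Φ T *ᵥ v) r ^ 2 ≤ ∑ r, v r ^ 2 := by
  simp only [sum_sq_eq_dotProduct_self]
  exact dotProduct_self_le_of_dotProduct_self_eq (proj_mulVec_dotProduct_self hG v)

lemma pinv_mulVec_sub_eq (hG : IsUnit (gram Φ T).det) {x : Fin n → ℝ} {v y : Fin m → ℝ}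
    (hx : ∀ i, i ∉ T → x i = 0) (hy : y = Φ *ᵥ x + v) :
    pinv Φ T *ᵥ y - (fun j : T => x j) = pinv Φ T *ᵥ v := by
  rw [hy, mulVec_eq_colSub_mulVec_of_support_subset Φ hx, mulVec_add, mulVec_mulVec,
    pinv_mul_colSub hG, one_mulVec, add_sub_cancel_left]

end LeastSquares

theorem ls_on_true_support_error_general {m n : ℕ} (Φ : Matrix (Fin m) (Fin n) ℝ) (K : ℕ)
    (T : Finset (Fin n)) (hT : T.card = K)
    (δ : ℝ) (hδ1 : δ < 1) (hRIP : RIP Φ K δ)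
    (x : Fin n → ℝ) (v y : Fin m → ℝ)
    (hsupp : ∀ i, i ∉ T → x i = 0) (hy : y = Φ.mulVec x + v)
    (xhat : Fin n → ℝ) (hxhsupp : ∀ i, i ∉ T → xhat i = 0)
    (hxh : ∀ j : T, xhat j = (pinv Φ T).mulVec y j) :
    l2 (fun i => xhat i - x i) ≤ l2 v / Real.sqrt (1 - δ) := by
  have hG := hRIP.isUnit_det_gram hδ1 hT.le
  have herr : (fun j : T => xhat j - x j) = pinv Φ T *ᵥ v := by
    rw [← pinv_mulVec_sub_eq hG hsupp hy]
    exact funext fun j => by simp only [hxh j, Pi.sub_apply]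
  have hbound : (1 - δ) * ∑ j : T, (xhat j - x j) ^ 2 ≤ ∑ r, v r ^ 2 := by
    calc (1 - δ) * ∑ j : T, (xhat j - x j) ^ 2
        ≤ ∑ r, (colSub Φ T *ᵥ fun j : T => xhat j - x j) r ^ 2 :=
          hRIP.sum_sq_le_colSub hT.le _
      _ = ∑ r, (proj Φ T *ᵥ v) r ^ 2 := by rw [herr, mulVec_mulVec, proj]
      _ ≤ ∑ r, v r ^ 2 := sum_sq_proj_mulVec_le hG v
  rw [l2, l2,
    sum_sq_eq_sum_subtype_of_support_subset fun i hi => by simp [hsupp i hi, hxhsupp i hi],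
    ← Real.sqrt_div (Finset.sum_nonneg fun r _ => sq_nonneg (v r))]
  exact Real.sqrt_le_sqrt ((le_div_iff₀ (by linarith)).mpr (by linarith))

/-- Least-squares estimate on the true support: `‖x̂ - x‖₂ ≤ ‖v‖₂/√(1-δ_K)`. -/
theorem ls_on_true_support_error {m n : ℕ} (Φ : Matrix (Fin m) (Fin n) ℝ) (K : ℕ)
    (T : Finset (Fin n)) (hT : T.card = K)
    (δ : ℝ) (hδ0 : 0 ≤ δ) (hδ1 : δ < 1) (hRIP : RIP Φ K δ)
    (x : Fin n → ℝ) (v y : Fin m → ℝ)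
    (hsupp : ∀ i, i ∉ T → x i = 0) (hy : y = Φ.mulVec x + v)
    (xhat : Fin n → ℝ) (hxhsupp : ∀ i, i ∉ T → xhat i = 0)
    (hxh : ∀ j : T, xhat j = (pinv Φ T).mulVec y j) :
    l2 (fun i => xhat i - x i) ≤ l2 v / Real.sqrt (1 - δ) :=
  ls_on_true_support_error_general Φ K T hT δ hδ1 hRIP x v y hsupp hy xhat hxhsupp hxh
end

section
/- Let T, T^k ⊆ {1,…,n} with |T ∪ T^k| = s and δ_s < 1, and let v ∈ ℝ^m. Then ‖Φ_T' P^⊥_{T^k} v‖₂ ≤ √(1+δ_s) ‖v‖₂. -/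
open Finset Matrix

/-!
Factor `Φ_T' P^⊥_{T^k}` and bound the `ℓ₂` operator norms of the factors. Transposition preserves
the operator norm, and since `T ⊆ T ∪ T^k` the upper RIP inequality says `‖Φ_T‖ ≤ √(1 + δ)`.
The matrix `P_{T^k}` is a self-adjoint idempotent, hence so is `P^⊥_{T^k}`, and star projections
in a C⋆-ring have norm at most `1`. When the Gram matrix is singular the junk inverse `0` makes
`P_{T^k} = 0`, which is still a star projection.
-/

open scoped Matrix.Norms.L2Operator

lemma l2_eq_norm_toLp {ι : Type*} [Fintype ι] (x : ι → ℝ) : l2 x = ‖WithLp.toLp 2 x‖ := by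
  simp [l2, EuclideanSpace.norm_eq]

lemma l2_mulVec_le_l2_opNorm {ι κ : Type*} [Fintype ι] [Fintype κ] [DecidableEq κ]
    (A : Matrix ι κ ℝ) (x : κ → ℝ) : l2 (A *ᵥ x) ≤ ‖A‖ * l2 x := by
  rw [l2_eq_norm_toLp, l2_eq_norm_toLp]
  exact A.l2_opNorm_mulVec (WithLp.toLp 2 x)

lemma l2_opNorm_transpose {ι κ : Type*} [Fintype ι] [Fintype κ] [DecidableEq ι] [DecidableEq κ]
    (A : Matrix ι κ ℝ) : ‖Aᵀ‖ = ‖A‖ := by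
  rw [← conjTranspose_eq_transpose_of_trivial, l2_opNorm_conjTranspose]

lemma l2_opNorm_le_of_l2_mulVec_le {ι κ : Type*} [Fintype ι] [Fintype κ] [DecidableEq κ]
    (A : Matrix ι κ ℝ) {c : ℝ} (hc : 0 ≤ c) (h : ∀ x, l2 (A *ᵥ x) ≤ c * l2 x) : ‖A‖ ≤ c := by
  rw [l2_opNorm_def]
  refine ContinuousLinearMap.opNorm_le_bound _ hc fun x => ?_
  have hx := h x.ofLp
  rw [l2_eq_norm_toLp, l2_eq_norm_toLp] at hx
  exact hx

lemma transpose_gram {m n : ℕ} (Φ : Matrix (Fin m) (Fin n) ℝ) (S : Finset (Fin n)) :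
    (gram Φ S)ᵀ = gram Φ S := by
  rw [_root_.gram, transpose_mul, transpose_transpose]

lemma isStarProjection_proj {m n : ℕ} (Φ : Matrix (Fin m) (Fin n) ℝ) (S : Finset (Fin n)) :
    IsStarProjection (proj Φ S) := by
  refine ⟨?_, ?_⟩
  · by_cases hG : IsUnit (gram Φ S).det
    · show proj Φ S * proj Φ S = proj Φ S
      simp only [proj, pinv, Matrix.mul_assoc]
      rw [← Matrix.mul_assoc (colSub Φ S)ᵀ, ← _root_.gram, nonsing_inv_mul_cancel_left _ _ hG]
    · simp [IsIdempotentElem, proj, pinv, nonsing_inv_apply_not_isUnit _ hG]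
  · simp only [IsSelfAdjoint, star_eq_conjTranspose, conjTranspose_eq_transpose_of_trivial, proj,
      pinv, transpose_mul, transpose_nonsing_inv, transpose_gram, transpose_transpose,
      Matrix.mul_assoc]

lemma l2_opNorm_projPerp_le_one {m n : ℕ} (Φ : Matrix (Fin m) (Fin n) ℝ) (S : Finset (Fin n)) :
    ‖projPerp Φ S‖ ≤ 1 :=
  (isStarProjection_proj Φ S).one_sub.norm_le

lemma Fintype.sum_eq_sum_subtype_of_eq_zero {ι M : Type*} [Fintype ι] [AddCommMonoid M]
    (S : Finset ι) (g : ι → M) (hg : ∀ i ∉ S, g i = 0) : ∑ i, g i = ∑ j : S, g j := by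
  rw [Finset.sum_coe_sort]
  exact (Finset.sum_subset (subset_univ S) fun i _ hi => hg i hi).symm

lemma RIP.l2_colSub_mulVec_le {m n K : ℕ} {Φ : Matrix (Fin m) (Fin n) ℝ} {δ : ℝ}
    (hRIP : RIP Φ K δ) {S : Finset (Fin n)} (hS : S.card ≤ K) (u : S → ℝ) :
    l2 (colSub Φ S *ᵥ u) ≤ √(1 + δ) * l2 u := by
  classical
  set x : Fin n → ℝ := fun i => if h : i ∈ S then u ⟨i, h⟩ else 0
  have hx : ∀ i ∉ S, x i = 0 := fun i hi => dif_neg hi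
  have hsparse : Ksparse K x :=
    (card_le_card fun i hi => not_imp_comm.1 (hx i) (mem_filter.1 hi).2).trans hS
  have hΦx : Φ *ᵥ x = colSub Φ S *ᵥ u := by
    ext r
    refine (Fintype.sum_eq_sum_subtype_of_eq_zero S _ fun i hi => by simp [hx i hi]).trans ?_
    simp [x, colSub, mulVec, dotProduct]
  have hxu : ∑ i, x i ^ 2 = ∑ j, u j ^ 2 := by
    refine (Fintype.sum_eq_sum_subtype_of_eq_zero S _ fun i hi => by simp [hx i hi]).trans ?_
    simp [x]
  have hupper := (hRIP x hsparse).2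
  rw [hΦx, hxu] at hupper
  calc l2 (colSub Φ S *ᵥ u) ≤ √((1 + δ) * ∑ j, u j ^ 2) := Real.sqrt_le_sqrt hupper
    _ = √(1 + δ) * l2 u := Real.sqrt_mul' _ (sum_nonneg fun j _ => sq_nonneg (u j))

lemma RIP.l2_opNorm_colSub_le {m n K : ℕ} {Φ : Matrix (Fin m) (Fin n) ℝ} {δ : ℝ}
    (hRIP : RIP Φ K δ) {S : Finset (Fin n)} (hS : S.card ≤ K) : ‖colSub Φ S‖ ≤ √(1 + δ) :=
  l2_opNorm_le_of_l2_mulVec_le _ (Real.sqrt_nonneg _) (hRIP.l2_colSub_mulVec_le hS)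

theorem proj_perp_correlation_bound_general {m n : ℕ} (Φ : Matrix (Fin m) (Fin n) ℝ)
    (T Tk : Finset (Fin n)) (δ : ℝ)
    (hRIP : RIP Φ (T ∪ Tk).card δ) (v : Fin m → ℝ) :
    l2 ((colSub Φ T)ᵀ.mulVec ((projPerp Φ Tk).mulVec v)) ≤
      Real.sqrt (1 + δ) * l2 v := by
  have hΦT : ‖colSub Φ T‖ ≤ √(1 + δ) := hRIP.l2_opNorm_colSub_le (card_le_card subset_union_left)
  have hv : 0 ≤ l2 v := Real.sqrt_nonneg _
  calc l2 ((colSub Φ T)ᵀ *ᵥ (projPerp Φ Tk *ᵥ v))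
      = l2 (((colSub Φ T)ᵀ * projPerp Φ Tk) *ᵥ v) := by rw [mulVec_mulVec]
    _ ≤ ‖(colSub Φ T)ᵀ * projPerp Φ Tk‖ * l2 v := l2_mulVec_le_l2_opNorm _ _
    _ ≤ ‖colSub Φ T‖ * ‖projPerp Φ Tk‖ * l2 v := by
        gcongr
        exact (l2_opNorm_mul _ _).trans_eq (by rw [l2_opNorm_transpose])
    _ ≤ √(1 + δ) * 1 * l2 v := by gcongr; exact l2_opNorm_projPerp_le_one Φ Tk
    _ = √(1 + δ) * l2 v := by rw [mul_one]

/-- `‖Φ_T' P⊥_{Tᵏ} v‖₂ ≤ √(1+δ_s) ‖v‖₂` where `s = |T ∪ Tᵏ|`. -/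
theorem proj_perp_correlation_bound {m n : ℕ} (Φ : Matrix (Fin m) (Fin n) ℝ)
    (T Tk : Finset (Fin n)) (δ : ℝ) (hδ1 : δ < 1)
    (hRIP : RIP Φ (T ∪ Tk).card δ) (v : Fin m → ℝ) :
    l2 ((colSub Φ T)ᵀ.mulVec ((projPerp Φ Tk).mulVec v)) ≤
      Real.sqrt (1 + δ) * l2 v :=
  proj_perp_correlation_bound_general Φ T Tk δ hRIP v
end
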